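/- For each 1 ≤ i ≤ n-1, each A-module M, and each object X = (X_j, φ_j) of Mor_n(A), there is an isomorphism of abelian groups Hom_{Mor_n(A)}(p_i(M), X) ≅ Hom_A(M, Ker(φ_{n-i}⋯φ_{n-1})), natural in both positions. -/

import Mathlib

/-!
A morphism `p_i(M) → X` is a family `g_j : M → X_j`, supported on `(a, a + i]`, that is
compatible with the structure maps on `[a, a + i)`: since `g_a = 0`, the condition
`φ_a g_{a+1} = 0` is compatibility at `a`. A compatible family is determined by its top
component, and composing the compatibility conditions gives `(φ_a ⋯ φ_{a+i-1}) g_{a+i} = g_a = 0`.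
Conversely, `u : M → X_{a+i}` with `(φ_a ⋯ φ_{a+i-1}) u = 0` descends along the `φ_j` to a
compatible family whose components at `j ≤ a` vanish.
-/

/-- The composite `φ_a φ_{a+1} ⋯ φ_{a+k-1} : X_{a+k} → X_a` of the structure maps;
`compSeg φ a 0 = id`,
`compSeg φ a (k+1) = compSeg φ a k ∘ φ_{a+k}`. -/
def compSeg {A : Type} [Ring A] {X : ℕ → Type} [∀ j, AddCommGroup (X j)]
    [∀ j, Module A (X j)] (φ : ∀ j, X (j + 1) →ₗ[A] X j) (a : ℕ) :
    ∀ k, X (a + k) →ₗ[A] X a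
  | 0 => LinearMap.id
  | k + 1 => (compSeg φ a k).comp (φ (a + k))

section CompatibleFamily

variable {A : Type} [Ring A] {X : ℕ → Type} [∀ j, AddCommGroup (X j)] [∀ j, Module A (X j)]
  (φ : ∀ j, X (j + 1) →ₗ[A] X j) {M : Type} [AddCommGroup M] [Module A M]

def IsCompatibleOn (g : ∀ j, M →ₗ[A] X j) (b m : ℕ) : Prop :=
  ∀ j, b ≤ j → j < m → (φ j).comp (g (j + 1)) = g j

variable {φ}

lemma isCompatibleOn_zero (b m : ℕ) : IsCompatibleOn φ (0 : ∀ j, M →ₗ[A] X j) b m :=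
  fun _ _ _ => LinearMap.comp_zero _

lemma IsCompatibleOn.of_succ {g : ∀ j, M →ₗ[A] X j} {b m : ℕ}
    (hg : IsCompatibleOn φ g (b + 1) m) (hb : (φ b).comp (g (b + 1)) = 0) (hgb : g b = 0) :
    IsCompatibleOn φ g b m := by
  intro j hbj hjm
  rcases hbj.eq_or_lt with rfl | hbj
  · rw [hb, hgb]
  · exact hg j hbj hjm

lemma IsCompatibleOn.compSeg_comp {g : ∀ j, M →ₗ[A] X j} {b : ℕ} :
    ∀ {k : ℕ}, IsCompatibleOn φ g b (b + k) → (compSeg φ b k).comp (g (b + k)) = g b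
  | 0, _ => LinearMap.id_comp _
  | k + 1, h => by
    have hk : (φ (b + k)).comp (g (b + (k + 1))) = g (b + k) := h (b + k) (by omega) (by omega)
    rw [compSeg, LinearMap.comp_assoc, hk]
    exact compSeg_comp fun j hbj hjk => h j hbj (by omega)

lemma IsCompatibleOn.eq_of_eq {g g' : ∀ j, M →ₗ[A] X j} {b m : ℕ}
    (hg : IsCompatibleOn φ g b m) (hg' : IsCompatibleOn φ g' b m) (htop : g m = g' m)
    {j : ℕ} (hbj : b ≤ j) (hjm : j ≤ m) : g j = g' j := by
  refine Nat.decreasingInduction' (fun k hkm hjk ih => ?_) hjm htop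
  rw [← hg k (hbj.trans hjk) hkm, ← hg' k (hbj.trans hjk) hkm, ih]

variable (φ)

/-- The family `j ↦ φ_j ⋯ φ_{m-1} u` below `m`, extended by `0` above `m`. -/
def descend {m : ℕ} (u : M →ₗ[A] X m) (j : ℕ) : M →ₗ[A] X j :=
  if j < m then (φ j).comp (descend u (j + 1))
  else Function.update (0 : ∀ j, M →ₗ[A] X j) m u j
termination_by m - j

variable {φ}

lemma descend_of_lt {m j : ℕ} (u : M →ₗ[A] X m) (h : j < m) :
    descend φ u j = (φ j).comp (descend φ u (j + 1)) := by
  rw [descend, if_pos h]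

lemma descend_self {m : ℕ} (u : M →ₗ[A] X m) : descend φ u m = u := by
  rw [descend, if_neg (lt_irrefl m), Function.update_self]

lemma descend_of_gt {m j : ℕ} (u : M →ₗ[A] X m) (h : m < j) : descend φ u j = 0 := by
  rw [descend, if_neg (by omega), Function.update_of_ne h.ne', Pi.zero_apply]

lemma isCompatibleOn_descend {m : ℕ} (u : M →ₗ[A] X m) {b c : ℕ} (hc : c ≤ m) :
    IsCompatibleOn φ (descend φ u) b c :=
  fun _ _ hj => (descend_of_lt u (by omega)).symm

end CompatibleFamily

theorem stmt7_general
    (A : Type) [Ring A]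
    (X : ℕ → Type) [∀ j, AddCommGroup (X j)] [∀ j, Module A (X j)]
    (φ : ∀ j, X (j + 1) →ₗ[A] X j)
    (M : Type) [AddCommGroup M] [Module A M]
    (i a : ℕ) :
    Function.Injective
      (fun g : {g : ∀ j, M →ₗ[A] X j //
          (∀ j, a + 1 ≤ j → j + 1 ≤ a + i → (φ j).comp (g (j + 1)) = g j) ∧
          ((φ a).comp (g (a + 1)) = 0) ∧
          (∀ j, j ≤ a ∨ a + i < j → g j = 0)} => g.1 (a + i)) ∧
    Set.range
      (fun g : {g : ∀ j, M →ₗ[A] X j //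
          (∀ j, a + 1 ≤ j → j + 1 ≤ a + i → (φ j).comp (g (j + 1)) = g j) ∧
          ((φ a).comp (g (a + 1)) = 0) ∧
          (∀ j, j ≤ a ∨ a + i < j → g j = 0)} => g.1 (a + i)) =
      {u : M →ₗ[A] X (a + i) | (compSeg φ a i).comp u = 0} := by
  refine ⟨?_, Set.ext fun u => ⟨?_, fun hu => ?_⟩⟩
  · rintro ⟨g₁, hg₁, hga₁, hz₁⟩ ⟨g₂, hg₂, hga₂, hz₂⟩ (htop : g₁ (a + i) = g₂ (a + i))
    refine Subtype.ext (funext fun j => show g₁ j = g₂ j from ?_)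
    by_cases hj : a ≤ j ∧ j ≤ a + i
    · exact (IsCompatibleOn.of_succ hg₁ hga₁ (hz₁ a (.inl le_rfl))).eq_of_eq
        (.of_succ hg₂ hga₂ (hz₂ a (.inl le_rfl))) htop hj.1 hj.2
    · rw [hz₁ j (by omega), hz₂ j (by omega)]
  · rintro ⟨⟨g, hg, hga, hz⟩, rfl⟩
    have hga0 : g a = 0 := hz a (.inl le_rfl)
    exact (IsCompatibleOn.of_succ hg hga hga0).compSeg_comp.trans hga0
  · have hbot : descend φ u a = 0 := by
      rw [← (isCompatibleOn_descend u le_rfl).compSeg_comp, descend_self]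
      exact hu
    refine ⟨⟨descend φ u, fun j _ hj => (descend_of_lt u hj).symm, ?_, ?_⟩, descend_self u⟩
    · rcases Nat.lt_or_ge a (a + i) with h | h
      · rw [← descend_of_lt u h, hbot]
      · rw [descend_of_gt u (by omega), LinearMap.comp_zero]
    · rintro j (hj | hj)
      · exact (isCompatibleOn_descend u (by omega)).eq_of_eq (isCompatibleOn_zero 0 a) hbot
          (Nat.zero_le j) hj
      · exact descend_of_gt u hj

/-- Let `A` be an Artin algebra, `n ≥ 2`, `1 ≤ i ≤ n-1`, `M` an `A`-module and
`X = (X_j, φ_j)` an object of `Mor_n(A)`.  Write `a = n - i` (so `a + i = n`).  A morphism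
`p_i(M) → X` is precisely a family `g_j : M → X_j` (`a+1 ≤ j ≤ n`, the components for
`j ≤ a` being `0`) with `φ_j ∘ g_{j+1} = g_j` and `φ_a ∘ g_{a+1} = 0`; the assignment
`g ↦ g_n` is an (automatically additive and natural) injection whose image consists exactly
of the `A`-maps `u : M → X_n` with `(φ_{n-i}⋯φ_{n-1}) ∘ u = 0`, i.e.
`Hom_{Mor_n(A)}(p_i(M), X) ≅ Hom_A(M, Ker (φ_{n-i}⋯φ_{n-1}))`. -/
theorem stmt7 (R : Type) [CommRing R] [IsArtinianRing R]
    (A : Type) [Ring A] [Algebra R A] [Module.Finite R A]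
    (n : ℕ) (hn : 2 ≤ n)
    (X : ℕ → Type) [∀ j, AddCommGroup (X j)] [∀ j, Module A (X j)]
    (φ : ∀ j, X (j + 1) →ₗ[A] X j)
    (M : Type) [AddCommGroup M] [Module A M]
    (i a : ℕ) (hi1 : 1 ≤ i) (hi2 : i ≤ n - 1) (ha : a + i = n) :
    Function.Injective
      (fun g : {g : ∀ j, M →ₗ[A] X j //
          (∀ j, a + 1 ≤ j → j + 1 ≤ a + i → (φ j).comp (g (j + 1)) = g j) ∧
          ((φ a).comp (g (a + 1)) = 0) ∧
          (∀ j, j ≤ a ∨ a + i < j → g j = 0)} => g.1 (a + i)) ∧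
    Set.range
      (fun g : {g : ∀ j, M →ₗ[A] X j //
          (∀ j, a + 1 ≤ j → j + 1 ≤ a + i → (φ j).comp (g (j + 1)) = g j) ∧
          ((φ a).comp (g (a + 1)) = 0) ∧
          (∀ j, j ≤ a ∨ a + i < j → g j = 0)} => g.1 (a + i)) =
      {u : M →ₗ[A] X (a + i) | (compSeg φ a i).comp u = 0} :=
  stmt7_general A X φ M i a
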